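/- Let m ∈ ℕ with m ≥ 1, let ε ∈ [-1,1], let k₀ ∈ ℤ, let 𝓗 be any countable set, and let h_i(y) (for i ∈ {1,…,m}, y ∈ ℤ) be arbitrary probability distributions on 𝓗. Consider the online binomial game with m rounds, parameter ε, offset k₀ and hint distributions h_i. If V(s_1, ε)(−k₀) < 1/m² or V(s_1, ε)(−k₀) > 1 − 1/m², then every adversary strategy b achieves bias |E[O_I − O_I⁻]| ≤ 2/m. -/

import Mathlib

noncomputable def binPMF (n : ℕ) (ε : ℝ) (k : ℤ) : ℝ :=
  if ((n : ℤ) + k) % 2 = 0 ∧ -(n : ℤ) ≤ k ∧ k ≤ (n : ℤ) then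
    (n.choose (((n : ℤ) + k) / 2).toNat : ℝ) *
      ((1 + ε) / 2) ^ (((n : ℤ) + k) / 2).toNat *
      ((1 - ε) / 2) ^ (((n : ℤ) - k) / 2).toNat
  else 0

noncomputable def binTail (n : ℕ) (ε : ℝ) (k : ℤ) : ℝ :=
  ∑ t ∈ Finset.Icc k (n : ℤ), binPMF n ε t

def lRound (m i : ℕ) : ℕ := m + 1 - i

def sRound (m i : ℕ) : ℕ := ∑ j ∈ Finset.Icc i m, lRound m j

/-- `Y_r`: the partial sum `k₀ + X_1 + ⋯ + X_r` along a trajectory of coin outcomes. -/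
def partY (m : ℕ) (k0 : ℤ) (x : Fin m → ℤ) (r : ℕ) : ℤ :=
  k0 + ∑ j ∈ Finset.univ.filter (fun j : Fin m => (j : ℕ) < r), x j

/-- Probability of a full trajectory of coins and hints in the online binomial game:
round `i+1` flips `ℓ_{i+1} = m - i` coins (summing to `x i`) and then samples the hint
`h i` from the distribution `hint (i+1) (Y_{i+1})`. -/
noncomputable def trajProb {H : Type} (m : ℕ) (ε : ℝ) (k0 : ℤ) (hint : ℕ → ℤ → H → ℝ)
    (x : Fin m → ℤ) (h : Fin m → H) : ℝ :=
  ∏ i : Fin m,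
    (binPMF (lRound m ((i : ℕ) + 1)) ε (x i) *
      hint ((i : ℕ) + 1) (partY m k0 x ((i : ℕ) + 1)) (h i))

/-- `O_r⁻ = Pr[Y_m ≥ 0 ∣ Y_{r-1} = y]`. -/
noncomputable def roundOminus (m : ℕ) (ε : ℝ) (r : ℕ) (y : ℤ) : ℝ :=
  binTail (sRound m r) ε (-y)

/-- `O_r = Pr[Y_m ≥ 0 ∣ Y_{r-1} = y, H_r = hv]`, computed by Bayes' rule over the value
of the round-`r` coin sum. -/
noncomputable def roundO {H : Type} (m : ℕ) (ε : ℝ) (hint : ℕ → ℤ → H → ℝ)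
    (r : ℕ) (y : ℤ) (hv : H) : ℝ :=
  (∑ z ∈ Finset.Icc (-(lRound m r : ℤ)) (lRound m r : ℤ),
      binPMF (lRound m r) ε z * hint r (y + z) hv * binTail (sRound m (r + 1)) ε (-(y + z))) /
  (∑ z ∈ Finset.Icc (-(lRound m r : ℤ)) (lRound m r : ℤ),
      binPMF (lRound m r) ε z * hint r (y + z) hv)

/-- The first round (as an element of `Fin m`, round `i` corresponding to `(i : ℕ) + 1`)
in which the adversary strategy `b` aborts, or `none` if it never aborts. -/
noncomputable def stopIdx {H : Type} (m : ℕ) (k0 : ℤ) (b : ℕ → ℤ → H → Bool)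
    (x : Fin m → ℤ) (h : Fin m → H) : Option (Fin m) :=
  if hex : (Finset.univ.filter
      (fun i : Fin m => b ((i : ℕ) + 1) (partY m k0 x (i : ℕ)) (h i) = true)).Nonempty
  then some ((Finset.univ.filter
      (fun i : Fin m => b ((i : ℕ) + 1) (partY m k0 x (i : ℕ)) (h i) = true)).min' hex)
  else none

/-- `O_I - O_I⁻` along a trajectory; it is `0` when the adversary never aborts, since
`O_{m+1} = O_{m+1}⁻`. -/
noncomputable def trajGain {H : Type} (m : ℕ) (ε : ℝ) (k0 : ℤ) (hint : ℕ → ℤ → H → ℝ)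
    (b : ℕ → ℤ → H → Bool) (x : Fin m → ℤ) (h : Fin m → H) : ℝ :=
  match stopIdx m k0 b x h with
  | some i =>
      roundO m ε hint ((i : ℕ) + 1) (partY m k0 x (i : ℕ)) (h i) -
        roundOminus m ε ((i : ℕ) + 1) (partY m k0 x (i : ℕ))
  | none => 0

/-- The bias `|E[O_I - O_I⁻]|` achieved by the adversary strategy `b` in the online
binomial game with `m` rounds, coin parameter `ε`, offset `k0` and hint distributions
`hint`. -/
noncomputable def gameBias {H : Type} (m : ℕ) (ε : ℝ) (k0 : ℤ) (hint : ℕ → ℤ → H → ℝ)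
    (b : ℕ → ℤ → H → Bool) : ℝ :=
  |∑' q : (Fin m → ℤ) × (Fin m → H),
      trajProb m ε k0 hint q.1 q.2 * trajGain m ε k0 hint b q.1 q.2|

/-! Suppose `O_1⁻ < 1/m²`; the other case is the same argument for `1 - O`. The beliefs
`O_1⁻, O_1, O_2⁻, O_2, …` form a martingale with values in `[0, 1]`, so by Ville's maximal
inequality they ever reach `1/m` with probability at most `m · O_1⁻ < 1/m`. Off that event both
`O_I` and `O_I⁻` lie in `[0, 1/m)`, so `|O_I - O_I⁻| < 1/m`, and on it `|O_I - O_I⁻| ≤ 1`.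
Hence `|E[O_I - O_I⁻]| ≤ 1/m + 1/m`. -/

open Finset
open scoped ENNReal

section Binomial

variable {ε : ℝ}

lemma binPMF_nonneg (hε : ε ∈ Set.Icc (-1 : ℝ) 1) (n : ℕ) (k : ℤ) : 0 ≤ binPMF n ε k := by
  obtain ⟨h1, h2⟩ := hε
  unfold binPMF
  split_ifs
  · have : 0 ≤ 1 + ε := by linarith
    have : 0 ≤ 1 - ε := by linarith
    positivity
  · exact le_rfl

lemma binPMF_eq_zero_of_notMem {n : ℕ} {k : ℤ} (hk : k ∉ Icc (-(n : ℤ)) n) :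
    binPMF n ε k = 0 := by
  rw [mem_Icc] at hk
  exact if_neg (by tauto)

lemma binPMF_zero_left (k : ℤ) : binPMF 0 ε k = if k = 0 then 1 else 0 := by
  unfold binPMF
  split_ifs with h h' h' <;> first | omega | simp_all

lemma binPMF_two_mul_sub (n j : ℕ) :
    binPMF n ε (2 * j - n) = n.choose j * ((1 + ε) / 2) ^ j * ((1 - ε) / 2) ^ (n - j) := by
  unfold binPMF
  rcases le_or_gt j n with hj | hj
  · rw [if_pos (by omega), show (((n : ℤ) + (2 * j - n)) / 2).toNat = j by omega,
      show (((n : ℤ) - (2 * j - n)) / 2).toNat = n - j by omega]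
  · rw [if_neg (by omega), Nat.choose_eq_zero_of_lt hj, Nat.cast_zero, zero_mul, zero_mul]

lemma binPMF_eq_zero_of_forall_ne {n : ℕ} {k : ℤ} (hk : ∀ j : ℕ, k ≠ 2 * j - n) :
    binPMF n ε k = 0 := by
  unfold binPMF
  rw [if_neg]
  rintro ⟨hpar, hlo, -⟩
  exact hk (((n : ℤ) + k) / 2).toNat (by omega)

lemma binPMF_succ (n : ℕ) (k : ℤ) :
    binPMF (n + 1) ε k = (1 + ε) / 2 * binPMF n ε (k - 1) + (1 - ε) / 2 * binPMF n ε (k + 1) := by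
  by_cases hk : ∃ j : ℕ, k = 2 * j - (n + 1 : ℕ)
  · obtain ⟨j, rfl⟩ := hk
    rcases j with _ | i
    · rw [binPMF_eq_zero_of_forall_ne (n := n) (by omega),
        show (2 * ((0 : ℕ) : ℤ) - ((n + 1 : ℕ) : ℤ)) + 1 = 2 * (0 : ℕ) - n by push_cast; ring,
        binPMF_two_mul_sub, binPMF_two_mul_sub]
      simp only [Nat.choose_zero_right, pow_zero, Nat.sub_zero]
      ring
    · rw [show 2 * ((i + 1 : ℕ) : ℤ) - ((n + 1 : ℕ) : ℤ) - 1 = 2 * i - n by push_cast; ring,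
        show 2 * ((i + 1 : ℕ) : ℤ) - ((n + 1 : ℕ) : ℤ) + 1 = 2 * (i + 1 : ℕ) - n by push_cast; ring,
        binPMF_two_mul_sub, binPMF_two_mul_sub, binPMF_two_mul_sub, Nat.choose_succ_succ',
        Nat.add_sub_add_right]
      rcases lt_or_ge i n with hi | hi
      · rw [show n - i = n - (i + 1) + 1 by omega]
        push_cast
        ring
      · rw [Nat.choose_eq_zero_of_lt (by omega : n < i + 1)]
        push_cast
        ring
  · push Not at hk
    rw [binPMF_eq_zero_of_forall_ne hk, binPMF_eq_zero_of_forall_ne (n := n) (k := k - 1)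
        (fun j h => hk (j + 1) (by push_cast at h ⊢; omega)),
      binPMF_eq_zero_of_forall_ne (n := n) (k := k + 1)
        (fun j h => hk j (by push_cast at h ⊢; omega))]
    ring

lemma sum_binPMF_mul_of_subset {n : ℕ} {s : Finset ℤ} (hs : Icc (-(n : ℤ)) n ⊆ s) (f : ℤ → ℝ) :
    ∑ z ∈ s, binPMF n ε z * f z = ∑ z ∈ Icc (-(n : ℤ)) n, binPMF n ε z * f z :=
  (sum_subset hs fun z _ hz => by rw [binPMF_eq_zero_of_notMem hz, zero_mul]).symm

lemma sum_binPMF_sub_mul (n : ℕ) {c : ℤ} (hc : |c| ≤ 1) (f : ℤ → ℝ) :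
    ∑ z ∈ Icc (-((n + 1 : ℕ) : ℤ)) (n + 1 : ℕ), binPMF n ε (z - c) * f z
      = ∑ z ∈ Icc (-(n : ℤ)) n, binPMF n ε z * f (z + c) := by
  rw [← sum_binPMF_mul_of_subset (s := Icc (-((n + 1 : ℕ) : ℤ) + -c) ((n + 1 : ℕ) + -c))
      (Icc_subset_Icc (by push_cast; linarith [(abs_le.1 hc).1])
        (by push_cast; linarith [(abs_le.1 hc).2])),
    ← map_add_right_Icc, sum_map]
  simp [sub_eq_add_neg]

lemma sum_binPMF_succ_mul (n : ℕ) (f : ℤ → ℝ) :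
    ∑ z ∈ Icc (-((n + 1 : ℕ) : ℤ)) (n + 1 : ℕ), binPMF (n + 1) ε z * f z
      = (1 + ε) / 2 * ∑ z ∈ Icc (-(n : ℤ)) n, binPMF n ε z * f (z + 1)
        + (1 - ε) / 2 * ∑ z ∈ Icc (-(n : ℤ)) n, binPMF n ε z * f (z - 1) := by
  simp only [binPMF_succ, add_mul, sum_add_distrib, mul_assoc, ← mul_sum]
  have hminus := sum_binPMF_sub_mul (ε := ε) n (c := -1) (by norm_num) f
  simp only [sub_neg_eq_add, ← sub_eq_add_neg] at hminus
  rw [sum_binPMF_sub_mul n (c := 1) (by norm_num), hminus]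

lemma sum_binPMF (n : ℕ) : ∑ z ∈ Icc (-(n : ℤ)) n, binPMF n ε z = 1 := by
  induction n with
  | zero => simp [binPMF_zero_left]
  | succ n ih =>
    have h := sum_binPMF_succ_mul (ε := ε) n (fun _ => 1)
    simp only [mul_one, ih] at h
    linarith

lemma binTail_eq_sum (n : ℕ) (k : ℤ) :
    binTail n ε k = ∑ z ∈ Icc (-(n : ℤ)) n, binPMF n ε z * if k ≤ z then 1 else 0 := by
  rw [← sum_binPMF_mul_of_subset (Icc_subset_Icc (min_le_right k _) le_rfl), binTail,
    ← sum_subset (Icc_subset_Icc (min_le_left k (-(n : ℤ))) le_rfl)]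
  · exact sum_congr rfl fun z hz => by rw [if_pos (mem_Icc.1 hz).1, mul_one]
  · intro z _ hz
    rw [if_neg (fun h => hz (mem_Icc.2 ⟨h, by simp_all⟩)), mul_zero]

lemma binTail_nonneg (hε : ε ∈ Set.Icc (-1 : ℝ) 1) (n : ℕ) (k : ℤ) : 0 ≤ binTail n ε k :=
  sum_nonneg fun t _ => binPMF_nonneg hε n t

lemma binTail_le_one (hε : ε ∈ Set.Icc (-1 : ℝ) 1) (n : ℕ) (k : ℤ) : binTail n ε k ≤ 1 := by
  rw [binTail_eq_sum]
  refine (sum_le_sum fun z _ => ?_).trans (sum_binPMF (ε := ε) n).le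
  split_ifs <;> linarith [binPMF_nonneg hε n z]

lemma binTail_succ (n : ℕ) (k : ℤ) :
    binTail (n + 1) ε k
      = (1 + ε) / 2 * binTail n ε (k - 1) + (1 - ε) / 2 * binTail n ε (k + 1) := by
  simp only [binTail_eq_sum, sum_binPMF_succ_mul, sub_le_iff_le_add, le_sub_iff_add_le]

lemma binTail_add (a b : ℕ) (k : ℤ) :
    binTail (a + b) ε k = ∑ z ∈ Icc (-(a : ℤ)) a, binPMF a ε z * binTail b ε (k - z) := by
  induction a generalizing k with
  | zero => simp [binPMF_zero_left]
  | succ a ih =>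
    rw [Nat.add_right_comm, binTail_succ, ih, ih, sum_binPMF_succ_mul]
    congr 2 <;> refine sum_congr rfl fun z _ => ?_ <;> ring_nf

end Binomial

lemma sRound_eq_lRound_add (m n : ℕ) : sRound m n = lRound m n + sRound m (n + 1) := by
  unfold sRound
  rcases le_or_gt n m with h | h
  · rw [← insert_Icc_add_one_left_eq_Icc h, sum_insert (by simp)]
  · simp [lRound, Icc_eq_empty_of_lt h, Icc_eq_empty_of_lt (h.trans (Nat.lt_succ_self n))]
    omega

section PartialSums

variable (k0 : ℤ) {r : ℕ}

lemma partY_succ (x : Fin r → ℤ) (i : Fin r) : partY r k0 x (i + 1) = partY r k0 x i + x i := by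
  unfold partY
  rw [add_assoc, add_comm _ (x i), ← sum_insert (s := univ.filter (fun j : Fin r => (j : ℕ) < i))
    (by simp)]
  congr 2
  ext j
  simp only [mem_filter, mem_univ, true_and, mem_insert, Fin.ext_iff]
  omega

lemma partY_snoc (x : Fin r → ℤ) (z : ℤ) {j : ℕ} (hj : j ≤ r) :
    partY (r + 1) k0 (Fin.snoc x z) j = partY r k0 x j := by
  simp only [partY, sum_filter, Fin.sum_univ_castSucc, Fin.val_castSucc, Fin.snoc_castSucc,
    Fin.val_last, Fin.snoc_last]
  rw [if_neg (by omega), add_zero]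

end PartialSums

section Beliefs

variable {H : Type} (m : ℕ) (ε : ℝ) (hint : ℕ → ℤ → H → ℝ)

/-- `Pr[H_n = hv ∣ Y_{n-1} = y]`: the denominator in `roundO`. -/
noncomputable def hintProb (n : ℕ) (y : ℤ) (hv : H) : ℝ :=
  ∑ z ∈ Icc (-(lRound m n : ℤ)) (lRound m n), binPMF (lRound m n) ε z * hint n (y + z) hv

/-- `u n y` plays the role of `O_n⁻` on `Y_{n-1} = y` and `uh n y hv` that of `O_n` on
`H_n = hv`: `u` is harmonic for the coin flips of each round and `uh` is its Bayesian update
given the hint, so that `O_1⁻, O_1, O_2⁻, O_2, …` is a martingale with values in `[0, 1]`. -/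
structure IsBeliefPair (u : ℕ → ℤ → ℝ) (uh : ℕ → ℤ → H → ℝ) : Prop where
  nonneg : ∀ n y, 0 ≤ u n y
  le_one : ∀ n y, u n y ≤ 1
  nonneg_update : ∀ n y hv, 0 ≤ uh n y hv
  le_one_update : ∀ n y hv, uh n y hv ≤ 1
  harmonic : ∀ n y,
    u n y = ∑ z ∈ Icc (-(lRound m n : ℤ)) (lRound m n), binPMF (lRound m n) ε z * u (n + 1) (y + z)
  bayes : ∀ n y hv,
    ∑ z ∈ Icc (-(lRound m n : ℤ)) (lRound m n),
        binPMF (lRound m n) ε z * hint n (y + z) hv * u (n + 1) (y + z)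
      = hintProb m ε hint n y hv * uh n y hv

variable {m ε hint}

lemma hintProb_nonneg (hε : ε ∈ Set.Icc (-1 : ℝ) 1) (hint_nonneg : ∀ n y hv, 0 ≤ hint n y hv)
    (n : ℕ) (y : ℤ) (hv : H) : 0 ≤ hintProb m ε hint n y hv :=
  sum_nonneg fun z _ => mul_nonneg (binPMF_nonneg hε _ z) (hint_nonneg n _ hv)

lemma sum_binPMF_mul_hint_mul_mem_Icc (hε : ε ∈ Set.Icc (-1 : ℝ) 1)
    (hint_nonneg : ∀ n y hv, 0 ≤ hint n y hv) {f : ℤ → ℝ} (hf0 : ∀ w, 0 ≤ f w)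
    (hf1 : ∀ w, f w ≤ 1) (n : ℕ) (y : ℤ) (hv : H) :
    ∑ z ∈ Icc (-(lRound m n : ℤ)) (lRound m n),
        binPMF (lRound m n) ε z * hint n (y + z) hv * f (y + z)
      ∈ Set.Icc 0 (hintProb m ε hint n y hv) := by
  have hw : ∀ z, 0 ≤ binPMF (lRound m n) ε z * hint n (y + z) hv :=
    fun z => mul_nonneg (binPMF_nonneg hε _ z) (hint_nonneg n _ hv)
  exact ⟨sum_nonneg fun z _ => mul_nonneg (hw z) (hf0 _),
    sum_le_sum fun z _ => mul_le_of_le_one_right (hw z) (hf1 _)⟩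

lemma isBeliefPair_round (hε : ε ∈ Set.Icc (-1 : ℝ) 1)
    (hint_nonneg : ∀ n y hv, 0 ≤ hint n y hv) :
    IsBeliefPair m ε hint (roundOminus m ε) (roundO m ε hint) := by
  have hnum n y hv := sum_binPMF_mul_hint_mul_mem_Icc (m := m) hε hint_nonneg
    (f := roundOminus m ε (n + 1)) (fun _ => binTail_nonneg hε _ _)
    (fun _ => binTail_le_one hε _ _) n y hv
  exact
    { nonneg := fun n y => binTail_nonneg hε _ _
      le_one := fun n y => binTail_le_one hε _ _
      nonneg_update := fun n y hv =>
        div_nonneg (hnum n y hv).1 (hintProb_nonneg hε hint_nonneg n y hv)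
      le_one_update := fun n y hv =>
        div_le_one_of_le₀ (hnum n y hv).2 (hintProb_nonneg hε hint_nonneg n y hv)
      harmonic := fun n y => by
        simp only [roundOminus, sRound_eq_lRound_add m n, binTail_add, neg_add, sub_eq_add_neg]
      -- where `hintProb` vanishes so does the numerator, so the junk value `x / 0 = 0` is harmless
      bayes := fun n y hv => (mul_div_cancel_of_imp' fun hD =>
        le_antisymm (hD ▸ (hnum n y hv).2) (hnum n y hv).1).symm }

lemma IsBeliefPair.one_sub {u : ℕ → ℤ → ℝ} {uh : ℕ → ℤ → H → ℝ}
    (hp : IsBeliefPair m ε hint u uh) :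
    IsBeliefPair m ε hint (fun n y => 1 - u n y) (fun n y hv => 1 - uh n y hv) where
  nonneg n y := sub_nonneg.2 (hp.le_one n y)
  le_one n y := sub_le_self _ (hp.nonneg n y)
  nonneg_update n y hv := sub_nonneg.2 (hp.le_one_update n y hv)
  le_one_update n y hv := sub_le_self _ (hp.nonneg_update n y hv)
  harmonic n y := by simp only [mul_sub, mul_one, sum_sub_distrib, sum_binPMF, ← hp.harmonic]
  bayes n y hv := by
    simp only [mul_sub, mul_one, sum_sub_distrib, hp.bayes]
    rfl

end Beliefs

section Trajectories

variable {H : Type} (m : ℕ) (ε : ℝ) (hint : ℕ → ℤ → H → ℝ)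

/-- `Pr[X_n = z, H_n = hv ∣ Y_{n-1} = y]`. -/
noncomputable def stepWeight (n : ℕ) (y z : ℤ) (hv : H) : ℝ≥0∞ :=
  ENNReal.ofReal (binPMF (lRound m n) ε z * hint n (y + z) hv)

/-- `trajProb` of the first `r` rounds, in `ℝ≥0∞`. -/
noncomputable def prefixProb (k0 : ℤ) {r : ℕ} (x : Fin r → ℤ) (h : Fin r → H) : ℝ≥0∞ :=
  ∏ i : Fin r, stepWeight m ε hint ((i : ℕ) + 1) (partY r k0 x i) (x i) (h i)

variable {m ε hint}

lemma summable_hint (hint_sum : ∀ n y, ∑' hv : H, hint n y hv = 1) (n : ℕ) (y : ℤ) :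
    Summable (hint n y) := by
  by_contra hns
  simpa [tsum_eq_zero_of_not_summable hns] using hint_sum n y

lemma tsum_ofReal_binPMF_mul (hε : ε ∈ Set.Icc (-1 : ℝ) 1) (n : ℕ) {c : ℤ → ℝ}
    (hc : ∀ z, 0 ≤ c z) :
    ∑' z, ENNReal.ofReal (binPMF n ε z * c z)
      = ENNReal.ofReal (∑ z ∈ Icc (-(n : ℤ)) n, binPMF n ε z * c z) := by
  rw [ENNReal.ofReal_sum_of_nonneg fun z _ => mul_nonneg (binPMF_nonneg hε n z) (hc z)]
  exact tsum_eq_sum fun z hz => by rw [binPMF_eq_zero_of_notMem hz, zero_mul, ENNReal.ofReal_zero]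

lemma tsum_stepWeight_mul_ofReal (hε : ε ∈ Set.Icc (-1 : ℝ) 1)
    (hint_nonneg : ∀ n y hv, 0 ≤ hint n y hv) (n : ℕ) (y : ℤ) (hv : H) {f : ℤ → ℝ}
    (hf : ∀ w, 0 ≤ f w) :
    ∑' z, stepWeight m ε hint n y z hv * ENNReal.ofReal (f (y + z))
      = ENNReal.ofReal (∑ z ∈ Icc (-(lRound m n : ℤ)) (lRound m n),
          binPMF (lRound m n) ε z * hint n (y + z) hv * f (y + z)) := by
  simp only [stepWeight, mul_assoc]
  rw [← tsum_ofReal_binPMF_mul hε _ fun z => mul_nonneg (hint_nonneg n _ hv) (hf _)]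
  exact tsum_congr fun z => (ENNReal.ofReal_mul
    (mul_nonneg (binPMF_nonneg hε _ z) (hint_nonneg n _ hv))).symm.trans (by rw [mul_assoc])

lemma tsum_stepWeight (hε : ε ∈ Set.Icc (-1 : ℝ) 1) (hint_nonneg : ∀ n y hv, 0 ≤ hint n y hv)
    (n : ℕ) (y : ℤ) (hv : H) :
    ∑' z, stepWeight m ε hint n y z hv = ENNReal.ofReal (hintProb m ε hint n y hv) := by
  simpa [hintProb] using tsum_stepWeight_mul_ofReal (m := m) hε hint_nonneg n y hv (f := fun _ => 1)
    fun _ => zero_le_one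

lemma tsum_tsum_stepWeight_mul_ofReal (hε : ε ∈ Set.Icc (-1 : ℝ) 1)
    (hint_nonneg : ∀ n y hv, 0 ≤ hint n y hv) (hint_sum : ∀ n y, ∑' hv : H, hint n y hv = 1)
    (n : ℕ) (y : ℤ) {f : ℤ → ℝ} (hf : ∀ w, 0 ≤ f w) :
    ∑' (z : ℤ) (hv : H), stepWeight m ε hint n y z hv * ENNReal.ofReal (f (y + z))
      = ENNReal.ofReal (∑ z ∈ Icc (-(lRound m n : ℤ)) (lRound m n),
          binPMF (lRound m n) ε z * f (y + z)) := by
  have hsplit : ∀ z hv, stepWeight m ε hint n y z hv * ENNReal.ofReal (f (y + z))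
      = ENNReal.ofReal (binPMF (lRound m n) ε z * f (y + z)) * ENNReal.ofReal (hint n (y + z) hv) :=
    fun z hv => by
      rw [stepWeight, ← ENNReal.ofReal_mul (mul_nonneg (binPMF_nonneg hε _ z) (hint_nonneg n _ hv)),
        ← ENNReal.ofReal_mul (mul_nonneg (binPMF_nonneg hε _ z) (hf _))]
      ring_nf
  simp only [hsplit, ENNReal.tsum_mul_left]
  rw [← tsum_ofReal_binPMF_mul hε _ (c := fun z => f (y + z)) fun _ => hf _]
  refine tsum_congr fun z => ?_
  rw [← ENNReal.ofReal_tsum_of_nonneg (hint_nonneg n _) (summable_hint hint_sum n _), hint_sum,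
    ENNReal.ofReal_one, mul_one]

lemma tsum_tsum_stepWeight (hε : ε ∈ Set.Icc (-1 : ℝ) 1)
    (hint_nonneg : ∀ n y hv, 0 ≤ hint n y hv) (hint_sum : ∀ n y, ∑' hv : H, hint n y hv = 1)
    (n : ℕ) (y : ℤ) : ∑' (z : ℤ) (hv : H), stepWeight m ε hint n y z hv = 1 := by
  simpa [sum_binPMF] using
    tsum_tsum_stepWeight_mul_ofReal hε hint_nonneg hint_sum n y (f := fun _ => 1)
      fun _ => zero_le_one

lemma ofReal_trajProb (hε : ε ∈ Set.Icc (-1 : ℝ) 1) (hint_nonneg : ∀ n y hv, 0 ≤ hint n y hv)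
    (k0 : ℤ) (x : Fin m → ℤ) (h : Fin m → H) :
    ENNReal.ofReal (trajProb m ε k0 hint x h) = prefixProb m ε hint k0 x h := by
  rw [trajProb, ENNReal.ofReal_prod_of_nonneg fun i _ =>
    mul_nonneg (binPMF_nonneg hε _ _) (hint_nonneg _ _ _)]
  exact prod_congr rfl fun i _ => by rw [partY_succ, stepWeight]

lemma prefixProb_snoc (k0 : ℤ) {r : ℕ} (x : Fin r → ℤ) (h : Fin r → H) (z : ℤ) (hv : H) :
    prefixProb m ε hint k0 (Fin.snoc x z) (Fin.snoc h hv)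
      = prefixProb m ε hint k0 x h * stepWeight m ε hint (r + 1) (partY r k0 x r) z hv := by
  simp only [prefixProb, Fin.prod_univ_castSucc, Fin.val_castSucc, Fin.snoc_castSucc,
    Fin.val_last, Fin.snoc_last, partY_snoc k0 x z le_rfl]
  congr 1
  exact prod_congr rfl fun i _ => by rw [partY_snoc k0 x z i.isLt.le]

lemma tsum_pair_fin_succ {α β : Type*} {r : ℕ} (F : (Fin (r + 1) → α) × (Fin (r + 1) → β) → ℝ≥0∞) :
    ∑' q, F q
      = ∑' (q : (Fin r → α) × (Fin r → β)) (a : α) (b : β), F (Fin.snoc q.1 a, Fin.snoc q.2 b) := by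
  let e : ((Fin r → α) × (Fin r → β)) × (α × β) ≃ (Fin (r + 1) → α) × (Fin (r + 1) → β) :=
    (Equiv.prodProdProdComm _ _ _ _).trans
      ((Equiv.prodComm _ _).prodCongr (Equiv.prodComm _ _) |>.trans
        ((Fin.snocEquiv fun _ => α).prodCongr (Fin.snocEquiv fun _ => β)))
  rw [← e.tsum_eq, ENNReal.tsum_prod']
  refine tsum_congr fun q => ?_
  rw [ENNReal.tsum_prod']
  rfl

lemma tsum_prefixProb_succ_mul (k0 : ℤ) {r : ℕ}
    (F : (Fin (r + 1) → ℤ) → (Fin (r + 1) → H) → ℝ≥0∞) :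
    ∑' q : (Fin (r + 1) → ℤ) × (Fin (r + 1) → H), prefixProb m ε hint k0 q.1 q.2 * F q.1 q.2
      = ∑' q : (Fin r → ℤ) × (Fin r → H), prefixProb m ε hint k0 q.1 q.2 *
          ∑' (z : ℤ) (hv : H), stepWeight m ε hint (r + 1) (partY r k0 q.1 r) z hv *
            F (Fin.snoc q.1 z) (Fin.snoc q.2 hv) := by
  rw [tsum_pair_fin_succ]
  simp only [prefixProb_snoc, mul_assoc, ENNReal.tsum_mul_left]

lemma tsum_prefixProb (hε : ε ∈ Set.Icc (-1 : ℝ) 1) (hint_nonneg : ∀ n y hv, 0 ≤ hint n y hv)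
    (hint_sum : ∀ n y, ∑' hv : H, hint n y hv = 1) (k0 : ℤ) (r : ℕ) :
    ∑' q : (Fin r → ℤ) × (Fin r → H), prefixProb m ε hint k0 q.1 q.2 = 1 := by
  induction r with
  | zero => simp [prefixProb]
  | succ r ih =>
    simpa [tsum_tsum_stepWeight hε hint_nonneg hint_sum, ih] using
      tsum_prefixProb_succ_mul (m := m) (ε := ε) (hint := hint) (r := r) k0 fun _ _ => 1

end Trajectories

section Maximal

variable {H : Type} {m : ℕ} {ε : ℝ} {hint : ℕ → ℤ → H → ℝ}

def ReachesLevel (k0 : ℤ) (u : ℕ → ℤ → ℝ) (uh : ℕ → ℤ → H → ℝ) (t : ℝ) {r : ℕ}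
    (x : Fin r → ℤ) (h : Fin r → H) : Prop :=
  ∃ j : Fin r, t ≤ u (j + 1) (partY r k0 x j) ∨ t ≤ uh (j + 1) (partY r k0 x j) (h j)

open Classical in
/-- The belief process after `r` rounds, stopped (and cut down to `t`) when it reaches `t`. -/
noncomputable def stoppedValue (k0 : ℤ) (u : ℕ → ℤ → ℝ) (uh : ℕ → ℤ → H → ℝ) (t : ℝ) {r : ℕ}
    (x : Fin r → ℤ) (h : Fin r → H) : ℝ≥0∞ :=
  if ReachesLevel k0 u uh t x h then ENNReal.ofReal t
  else ENNReal.ofReal (u (r + 1) (partY r k0 x r))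

lemma reachesLevel_snoc (k0 : ℤ) (u : ℕ → ℤ → ℝ) (uh : ℕ → ℤ → H → ℝ) (t : ℝ) {r : ℕ}
    (x : Fin r → ℤ) (h : Fin r → H) (z : ℤ) (hv : H) :
    ReachesLevel k0 u uh t (Fin.snoc x z) (Fin.snoc h hv) ↔ ReachesLevel k0 u uh t x h ∨
      t ≤ u (r + 1) (partY r k0 x r) ∨ t ≤ uh (r + 1) (partY r k0 x r) hv := by
  simp only [ReachesLevel, Fin.exists_fin_succ', Fin.val_castSucc, Fin.snoc_castSucc,
    Fin.val_last, Fin.snoc_last, partY_snoc k0 x z le_rfl]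
  refine or_congr (exists_congr fun j => ?_) Iff.rfl
  rw [partY_snoc k0 x z j.isLt.le]

variable {u : ℕ → ℤ → ℝ} {uh : ℕ → ℤ → H → ℝ}

/-- One round of optional stopping: stopping at `t` on the hints whose update `uh` reaches `t`
does not increase the expectation, because `bayes` makes `uh` the conditional mean of
`u (n + 1)`. -/
lemma IsBeliefPair.tsum_stepWeight_mul_ite_le (hp : IsBeliefPair m ε hint u uh)
    (hε : ε ∈ Set.Icc (-1 : ℝ) 1) (hint_nonneg : ∀ n y hv, 0 ≤ hint n y hv)
    (hint_sum : ∀ n y, ∑' hv : H, hint n y hv = 1) (t : ℝ) (n : ℕ) (y : ℤ) :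
    ∑' (z : ℤ) (hv : H), stepWeight m ε hint n y z hv *
        (if t ≤ uh n y hv then ENNReal.ofReal t else ENNReal.ofReal (u (n + 1) (y + z)))
      ≤ ENNReal.ofReal (u n y) := by
  have hu := hp.nonneg (n + 1)
  calc _ = ∑' (hv : H) (z : ℤ), stepWeight m ε hint n y z hv *
        (if t ≤ uh n y hv then ENNReal.ofReal t else ENNReal.ofReal (u (n + 1) (y + z))) :=
        ENNReal.tsum_comm
    _ ≤ ∑' (hv : H) (z : ℤ), stepWeight m ε hint n y z hv * ENNReal.ofReal (u (n + 1) (y + z)) := by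
        refine ENNReal.tsum_le_tsum fun hv => ?_
        split_ifs with ht
        · rw [ENNReal.tsum_mul_right, tsum_stepWeight hε hint_nonneg,
            tsum_stepWeight_mul_ofReal hε hint_nonneg n y hv hu, hp.bayes,
            ENNReal.ofReal_mul (hintProb_nonneg hε hint_nonneg n y hv)]
          exact mul_le_mul_right (ENNReal.ofReal_le_ofReal ht) _
        · exact le_rfl
    _ = ENNReal.ofReal (u n y) := by
        rw [ENNReal.tsum_comm, tsum_tsum_stepWeight_mul_ofReal hε hint_nonneg hint_sum n y hu,
          ← hp.harmonic]

lemma IsBeliefPair.tsum_stepWeight_mul_stoppedValue_snoc_le (hp : IsBeliefPair m ε hint u uh)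
    (hε : ε ∈ Set.Icc (-1 : ℝ) 1) (hint_nonneg : ∀ n y hv, 0 ≤ hint n y hv)
    (hint_sum : ∀ n y, ∑' hv : H, hint n y hv = 1) (k0 : ℤ) (t : ℝ) {r : ℕ}
    (x : Fin r → ℤ) (h : Fin r → H) :
    ∑' (z : ℤ) (hv : H), stepWeight m ε hint (r + 1) (partY r k0 x r) z hv *
        stoppedValue k0 u uh t (Fin.snoc x z) (Fin.snoc h hv)
      ≤ stoppedValue k0 u uh t x h := by
  classical
  set y := partY r k0 x r
  have hY : ∀ z, partY (r + 1) k0 (Fin.snoc x z) (r + 1) = y + z := fun z => by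
    simpa [partY_snoc k0 x z le_rfl] using partY_succ k0 (Fin.snoc x z) (Fin.last r)
  have hsnoc : ∀ z hv, stoppedValue k0 u uh t (Fin.snoc x z) (Fin.snoc h hv)
      = if ReachesLevel k0 u uh t x h ∨ t ≤ u (r + 1) y then ENNReal.ofReal t
        else if t ≤ uh (r + 1) y hv then ENNReal.ofReal t
        else ENNReal.ofReal (u (r + 1 + 1) (y + z)) := fun z hv => by
    simp only [stoppedValue, reachesLevel_snoc, hY, ← or_assoc]
    split_ifs <;> tauto
  simp only [hsnoc]
  by_cases hstop : ReachesLevel k0 u uh t x h ∨ t ≤ u (r + 1) y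
  · simp only [if_pos hstop, ENNReal.tsum_mul_right, tsum_tsum_stepWeight hε hint_nonneg hint_sum,
      one_mul, stoppedValue]
    split_ifs with hreach
    · exact le_rfl
    · exact ENNReal.ofReal_le_ofReal (hstop.resolve_left hreach)
  · simp only [if_neg hstop, stoppedValue, if_neg fun hr => hstop (Or.inl hr)]
    exact hp.tsum_stepWeight_mul_ite_le hε hint_nonneg hint_sum t (r + 1) y

lemma IsBeliefPair.tsum_prefixProb_mul_stoppedValue_le (hp : IsBeliefPair m ε hint u uh)
    (hε : ε ∈ Set.Icc (-1 : ℝ) 1) (hint_nonneg : ∀ n y hv, 0 ≤ hint n y hv)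
    (hint_sum : ∀ n y, ∑' hv : H, hint n y hv = 1) (k0 : ℤ) (t : ℝ) (r : ℕ) :
    ∑' q : (Fin r → ℤ) × (Fin r → H),
        prefixProb m ε hint k0 q.1 q.2 * stoppedValue k0 u uh t q.1 q.2
      ≤ ENNReal.ofReal (u 1 k0) := by
  induction r with
  | zero => simp [prefixProb, stoppedValue, ReachesLevel, partY]
  | succ r ih =>
    rw [tsum_prefixProb_succ_mul]
    refine le_trans (ENNReal.tsum_le_tsum fun q => ?_) ih
    exact mul_le_mul_right
      (hp.tsum_stepWeight_mul_stoppedValue_snoc_le hε hint_nonneg hint_sum k0 t q.1 q.2) _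

open Classical in
/-- Ville's maximal inequality for the belief process. -/
lemma IsBeliefPair.ofReal_mul_tsum_reachesLevel_le (hp : IsBeliefPair m ε hint u uh)
    (hε : ε ∈ Set.Icc (-1 : ℝ) 1) (hint_nonneg : ∀ n y hv, 0 ≤ hint n y hv)
    (hint_sum : ∀ n y, ∑' hv : H, hint n y hv = 1) (k0 : ℤ) (t : ℝ) (r : ℕ) :
    ENNReal.ofReal t * ∑' q : (Fin r → ℤ) × (Fin r → H),
        (if ReachesLevel k0 u uh t q.1 q.2 then prefixProb m ε hint k0 q.1 q.2 else 0)
      ≤ ENNReal.ofReal (u 1 k0) := by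
  refine le_trans ?_ (hp.tsum_prefixProb_mul_stoppedValue_le hε hint_nonneg hint_sum k0 t r)
  rw [← ENNReal.tsum_mul_left]
  refine ENNReal.tsum_le_tsum fun q => ?_
  unfold stoppedValue
  split_ifs
  · rw [mul_comm]
  · simp

end Maximal

section Game

variable {H : Type} {m : ℕ} {ε : ℝ} {hint : ℕ → ℤ → H → ℝ} {u : ℕ → ℤ → ℝ} {uh : ℕ → ℤ → H → ℝ}

lemma trajGain_eq_zero_or (k0 : ℤ) (b : ℕ → ℤ → H → Bool) (x : Fin m → ℤ) (h : Fin m → H) :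
    trajGain m ε k0 hint b x h = 0 ∨ ∃ j : Fin m, trajGain m ε k0 hint b x h
      = roundO m ε hint (j + 1) (partY m k0 x j) (h j)
        - roundOminus m ε (j + 1) (partY m k0 x j) := by
  unfold trajGain
  split
  · exact Or.inr ⟨_, rfl⟩
  · exact Or.inl rfl

open Classical in
lemma IsBeliefPair.abs_trajGain_le (hp : IsBeliefPair m ε hint u uh)
    (hgain : ∀ n y hv, |roundO m ε hint n y hv - roundOminus m ε n y| = |uh n y hv - u n y|)
    (k0 : ℤ) (b : ℕ → ℤ → H → Bool) {t : ℝ} (ht : 0 ≤ t) (x : Fin m → ℤ) (h : Fin m → H) :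
    |trajGain m ε k0 hint b x h| ≤ t + if ReachesLevel k0 u uh t x h then 1 else 0 := by
  rcases trajGain_eq_zero_or k0 b x h with h0 | ⟨j, hj⟩
  · rw [h0, abs_zero]
    split_ifs <;> linarith
  rw [hj, hgain]
  have := hp.nonneg (j + 1) (partY m k0 x j)
  have := hp.le_one (j + 1) (partY m k0 x j)
  have := hp.nonneg_update (j + 1) (partY m k0 x j) (h j)
  have := hp.le_one_update (j + 1) (partY m k0 x j) (h j)
  split_ifs with hreach
  · rw [abs_le]
    constructor <;> linarith
  · have hlow : u (j + 1) (partY m k0 x j) < t ∧ uh (j + 1) (partY m k0 x j) (h j) < t := by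
      simpa [ReachesLevel] using fun hj' => hreach ⟨j, hj'⟩
    rw [abs_le]
    constructor <;> linarith

lemma abs_tsum_le_toReal_tsum_ofReal_abs {α : Type*} (f : α → ℝ) :
    |∑' a, f a| ≤ (∑' a, ENNReal.ofReal |f a|).toReal := by
  by_cases hf : Summable f
  · rw [← ENNReal.ofReal_tsum_of_nonneg (fun _ => abs_nonneg _) hf.abs,
      ENNReal.toReal_ofReal (tsum_nonneg fun _ => abs_nonneg _)]
    simpa only [Real.norm_eq_abs] using norm_tsum_le_tsum_norm hf.norm
  · rw [tsum_eq_zero_of_not_summable hf, abs_zero]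
    exact ENNReal.toReal_nonneg

lemma IsBeliefPair.gameBias_le (hp : IsBeliefPair m ε hint u uh)
    (hε : ε ∈ Set.Icc (-1 : ℝ) 1) (hint_nonneg : ∀ n y hv, 0 ≤ hint n y hv)
    (hint_sum : ∀ n y, ∑' hv : H, hint n y hv = 1)
    (hgain : ∀ n y hv, |roundO m ε hint n y hv - roundOminus m ε n y| = |uh n y hv - u n y|)
    (k0 : ℤ) (b : ℕ → ℤ → H → Bool) {t : ℝ} (ht : 0 < t) :
    gameBias m ε k0 hint b ≤ t + u 1 k0 / t := by
  classical
  set R := ∑' q : (Fin m → ℤ) × (Fin m → H),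
    if ReachesLevel k0 u uh t q.1 q.2 then prefixProb m ε hint k0 q.1 q.2 else 0
  have hpoint : ∀ q : (Fin m → ℤ) × (Fin m → H),
      ENNReal.ofReal |trajProb m ε k0 hint q.1 q.2 * trajGain m ε k0 hint b q.1 q.2|
        ≤ ENNReal.ofReal t * prefixProb m ε hint k0 q.1 q.2 +
          if ReachesLevel k0 u uh t q.1 q.2 then prefixProb m ε hint k0 q.1 q.2 else 0 := by
    intro q
    have hP : 0 ≤ trajProb m ε k0 hint q.1 q.2 :=
      prod_nonneg fun i _ => mul_nonneg (binPMF_nonneg hε _ _) (hint_nonneg _ _ _)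
    rw [abs_mul, abs_of_nonneg hP, ENNReal.ofReal_mul hP, ofReal_trajProb hε hint_nonneg]
    calc _ ≤ prefixProb m ε hint k0 q.1 q.2 *
          ENNReal.ofReal (t + if ReachesLevel k0 u uh t q.1 q.2 then 1 else 0) :=
          mul_le_mul_right (ENNReal.ofReal_le_ofReal (hp.abs_trajGain_le hgain k0 b ht.le _ _)) _
      _ = _ := by split_ifs <;> simp [ENNReal.ofReal_add ht.le, mul_add, mul_comm]
  have hS : ∑' q : (Fin m → ℤ) × (Fin m → H),
      ENNReal.ofReal |trajProb m ε k0 hint q.1 q.2 * trajGain m ε k0 hint b q.1 q.2|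
        ≤ ENNReal.ofReal t + R := by
    refine (ENNReal.tsum_le_tsum hpoint).trans_eq ?_
    rw [ENNReal.tsum_add, ENNReal.tsum_mul_left, tsum_prefixProb hε hint_nonneg hint_sum, mul_one]
  have hR : R ≤ ENNReal.ofReal (u 1 k0 / t) := by
    rw [ENNReal.ofReal_div_of_pos ht, ENNReal.le_div_iff_mul_le (Or.inl (by simpa using ht))
      (Or.inl ENNReal.ofReal_ne_top), mul_comm]
    exact hp.ofReal_mul_tsum_reachesLevel_le hε hint_nonneg hint_sum k0 t m
  have hbound : 0 ≤ u 1 k0 / t := div_nonneg (hp.nonneg 1 k0) ht.le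
  refine (abs_tsum_le_toReal_tsum_ofReal_abs _).trans (ENNReal.toReal_le_of_le_ofReal
    (add_nonneg ht.le hbound) (hS.trans ?_))
  rw [ENNReal.ofReal_add ht.le hbound]
  exact add_le_add_right hR _

lemma IsBeliefPair.gameBias_le_two_div (hp : IsBeliefPair m ε hint u uh)
    (hε : ε ∈ Set.Icc (-1 : ℝ) 1) (hint_nonneg : ∀ n y hv, 0 ≤ hint n y hv)
    (hint_sum : ∀ n y, ∑' hv : H, hint n y hv = 1)
    (hgain : ∀ n y hv, |roundO m ε hint n y hv - roundOminus m ε n y| = |uh n y hv - u n y|)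
    (k0 : ℤ) (b : ℕ → ℤ → H → Bool) (hu : u 1 k0 < 1 / (m : ℝ) ^ 2) :
    gameBias m ε k0 hint b ≤ 2 / m := by
  rcases Nat.eq_zero_or_pos m with rfl | hm
  · simp only [CharP.cast_eq_zero, ne_eq, OfNat.ofNat_ne_zero, not_false_eq_true, zero_pow,
      div_zero] at hu
    linarith [hp.nonneg 1 k0]
  have hm' : (0 : ℝ) < m := by exact_mod_cast hm
  calc gameBias m ε k0 hint b ≤ 1 / m + u 1 k0 / (1 / m) :=
        hp.gameBias_le hε hint_nonneg hint_sum hgain k0 b (by positivity)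
    _ ≤ 2 / m := by
        rw [lt_div_iff₀ (by positivity)] at hu
        rw [div_div_eq_mul_div, div_one, div_add' _ _ _ hm'.ne', div_le_div_iff_of_pos_right hm']
        nlinarith

end Game

theorem stmt_19_general (m : ℕ) (ε : ℝ) (hε : ε ∈ Set.Icc (-1 : ℝ) 1) (k0 : ℤ)
    (H : Type) (hint : ℕ → ℤ → H → ℝ)
    (hint_nonneg : ∀ r y hv, 0 ≤ hint r y hv)
    (hint_sum : ∀ r y, ∑' hv : H, hint r y hv = 1)
    (hdet : binTail (sRound m 1) ε (-k0) < 1 / (m : ℝ) ^ 2 ∨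
      1 - 1 / (m : ℝ) ^ 2 < binTail (sRound m 1) ε (-k0))
    (b : ℕ → ℤ → H → Bool) :
    gameBias m ε k0 hint b ≤ 2 / m := by
  rcases hdet with hlow | hhigh
  · exact (isBeliefPair_round hε hint_nonneg).gameBias_le_two_div hε hint_nonneg hint_sum
      (fun _ _ _ => rfl) k0 b hlow
  · refine (isBeliefPair_round hε hint_nonneg).one_sub.gameBias_le_two_div hε hint_nonneg hint_sum
      (fun n y hv => by rw [sub_sub_sub_cancel_left, abs_sub_comm]) k0 b ?_
    change 1 - binTail (sRound m 1) ε (-k0) < _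
    linarith

theorem stmt_19 (m : ℕ) (hm : 1 ≤ m) (ε : ℝ) (hε : ε ∈ Set.Icc (-1 : ℝ) 1) (k0 : ℤ)
    (H : Type) [Countable H] (hint : ℕ → ℤ → H → ℝ)
    (hint_nonneg : ∀ r y hv, 0 ≤ hint r y hv)
    (hint_sum : ∀ r y, ∑' hv : H, hint r y hv = 1)
    (hdet : binTail (sRound m 1) ε (-k0) < 1 / (m : ℝ) ^ 2 ∨
      1 - 1 / (m : ℝ) ^ 2 < binTail (sRound m 1) ε (-k0))
    (b : ℕ → ℤ → H → Bool) :
    gameBias m ε k0 hint b ≤ 2 / m :=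
  stmt_19_general m ε hε k0 H hint hint_nonneg hint_sum hdet b
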